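/- Let U ⊆ ℝⁿ be open, let β_{ij} : U → ℝ (for i ≠ j) be smooth, and for each i let η_i be a smooth positive function depending only on the i-th coordinate R^i, with derivative η_i'. Define β̃_{ij} := β_{ij}·√(η_i/η_j). Then: (a) for pairwise distinct i,j,k, the equation ∂_k β̃_{ij} = β̃_{ik} β̃_{kj} holds at a point if and only if ∂_k β_{ij} = β_{ik} β_{kj} holds there; and (b) for i ≠ j, the equation ∂_i β̃_{ij} + ∂_j β̃_{ji} + Σ_{k≠i,j} β̃_{ki} β̃_{kj} = 0 holds at a point if and only if (F3) holds there: η_i ∂_i β_{ij} + η_j ∂_j β_{ji} + (1/2)η_i' β_{ij} + (1/2)η_j' β_{ji} + Σ_{k≠i,j} η_k β_{ki} β_{kj} = 0. -/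

import Mathlib

open scoped BigOperators

/-- Partial derivative of a scalar function on `ℝⁿ` in the `k`-th coordinate direction. -/
noncomputable def pd {n : ℕ} (k : Fin n) (f : (Fin n → ℝ) → ℝ) : (Fin n → ℝ) → ℝ :=
  fun x => fderiv ℝ f x (Pi.single k 1)

lemma pd_congr {n : ℕ} (k : Fin n) {f g : (Fin n → ℝ) → ℝ} {x : Fin n → ℝ}
    (h : f =ᶠ[nhds x] g) : pd k f x = pd k g x := by
  unfold pd; rw [h.fderiv_eq]

lemma pd_mul {n : ℕ} (k : Fin n) {f g : (Fin n → ℝ) → ℝ} {x : Fin n → ℝ}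
    (hf : DifferentiableAt ℝ f x) (hg : DifferentiableAt ℝ g x) :
    pd k (fun y => f y * g y) x = pd k f x * g x + f x * pd k g x := by
  unfold pd
  rw [fderiv_fun_mul hf hg]
  simp [smul_eq_mul]
  ring

lemma pd_coord_comp {n : ℕ} (k i : Fin n) {g : ℝ → ℝ} {g' : ℝ} {x : Fin n → ℝ}
    (hg : HasDerivAt g g' (x i)) :
    pd k (fun y => g (y i)) x = g' * (Pi.single k (1 : ℝ) : Fin n → ℝ) i := by
  have hL : HasFDerivAt (fun y : Fin n → ℝ => y i)
      (ContinuousLinearMap.proj i : (Fin n → ℝ) →L[ℝ] ℝ) x :=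
    (ContinuousLinearMap.proj i : (Fin n → ℝ) →L[ℝ] ℝ).hasFDerivAt
  have hc : HasFDerivAt (fun y : Fin n → ℝ => g (y i))
      ((ContinuousLinearMap.smulRight (1 : ℝ →L[ℝ] ℝ) g').comp
        (ContinuousLinearMap.proj i : (Fin n → ℝ) →L[ℝ] ℝ)) x :=
    (hg.hasFDerivAt).comp x hL
  unfold pd
  rw [hc.fderiv]
  simp [ContinuousLinearMap.smulRight_apply, mul_comm]

lemma diffAt_coord {n : ℕ} (i : Fin n) {g : ℝ → ℝ} {x : Fin n → ℝ}
    (hg : DifferentiableAt ℝ g (x i)) :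
    DifferentiableAt ℝ (fun y : Fin n → ℝ => g (y i)) x :=
  hg.comp x (ContinuousLinearMap.proj i : (Fin n → ℝ) →L[ℝ] ℝ).differentiableAt

/-- Main computation: the partial derivative of `β̃_{ij}` in direction `k`. -/
lemma pd_tilde {n : ℕ} (i j k : Fin n) {βij : (Fin n → ℝ) → ℝ} {ηi ηj : ℝ → ℝ}
    {x : Fin n → ℝ}
    (hβ : DifferentiableAt ℝ βij x)
    (hηi : ContDiff ℝ (⊤ : ℕ∞) ηi) (hηj : ContDiff ℝ (⊤ : ℕ∞) ηj)
    (hi : 0 < ηi (x i)) (hj : 0 < ηj (x j)) :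
    pd k (fun y => βij y * Real.sqrt (ηi (y i) / ηj (y j))) x =
      pd k βij x * (Real.sqrt (ηi (x i)) / Real.sqrt (ηj (x j)))
      + βij x * ((deriv ηi (x i) / (2 * Real.sqrt (ηi (x i))) * (Real.sqrt (ηj (x j)))⁻¹)
          * (Pi.single k (1 : ℝ) : Fin n → ℝ) i
        + Real.sqrt (ηi (x i)) *
          (-(deriv ηj (x j) / (2 * Real.sqrt (ηj (x j)))) / (Real.sqrt (ηj (x j))) ^ 2)
          * (Pi.single k (1 : ℝ) : Fin n → ℝ) j) := by
  have hsj : Real.sqrt (ηj (x j)) ≠ 0 := Real.sqrt_ne_zero'.2 hj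
  have hopen : ∀ᶠ y in nhds x, 0 < ηi (y i) := by
    have hc : Continuous fun y : Fin n → ℝ => ηi (y i) := hηi.continuous.comp (continuous_apply i)
    exact (isOpen_lt continuous_const hc).mem_nhds (by simpa using hi)
  have heq : (fun y => βij y * Real.sqrt (ηi (y i) / ηj (y j))) =ᶠ[nhds x]
      (fun y => βij y * ((fun t => Real.sqrt (ηi t)) (y i) *
        ((fun t => (Real.sqrt (ηj t))⁻¹) (y j)))) := by
    filter_upwards [hopen] with y hy
    rw [Real.sqrt_div hy.le, div_eq_mul_inv]
  rw [pd_congr k heq]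
  have hdi : HasDerivAt (fun t => Real.sqrt (ηi t))
      (deriv ηi (x i) / (2 * Real.sqrt (ηi (x i)))) (x i) :=
    ((hηi.differentiable (by simp) (x i)).hasDerivAt).sqrt (ne_of_gt hi)
  have hdj : HasDerivAt (fun t => Real.sqrt (ηj t))
      (deriv ηj (x j) / (2 * Real.sqrt (ηj (x j)))) (x j) :=
    ((hηj.differentiable (by simp) (x j)).hasDerivAt).sqrt (ne_of_gt hj)
  have hdjinv : HasDerivAt (fun t => (Real.sqrt (ηj t))⁻¹)
      (-(deriv ηj (x j) / (2 * Real.sqrt (ηj (x j)))) / (Real.sqrt (ηj (x j))) ^ 2) (x j) :=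
    hdj.inv hsj
  have d1 : DifferentiableAt ℝ (fun y : Fin n → ℝ => Real.sqrt (ηi (y i))) x :=
    diffAt_coord i hdi.differentiableAt
  have d2 : DifferentiableAt ℝ (fun y : Fin n → ℝ => (Real.sqrt (ηj (y j)))⁻¹) x :=
    diffAt_coord j hdjinv.differentiableAt
  rw [pd_mul k hβ (d1.fun_mul d2), pd_mul k d1 d2, pd_coord_comp k i hdi, pd_coord_comp k j hdjinv]
  rw [div_eq_mul_inv]
  ring

/-- The rescaled rotation coefficients `β̃_{ij} = β_{ij}√(η_i/η_j)` satisfy the flatness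
equations iff `β` satisfies the corresponding equations: (a) the off-diagonal equation
`∂_k β̃_{ij} = β̃_{ik}β̃_{kj}` is equivalent to `∂_k β_{ij} = β_{ik}β_{kj}`, and (b) the
diagonal flatness equation for `β̃` is equivalent to (F3) for `β`. -/
theorem rescaled_rotation_coefficients {n : ℕ} (U : Set (Fin n → ℝ)) (hU : IsOpen U)
    (β : Fin n → Fin n → (Fin n → ℝ) → ℝ)
    (hβ : ∀ i j : Fin n, i ≠ j → ContDiffOn ℝ (⊤ : ℕ∞) (β i j) U)
    (η : Fin n → ℝ → ℝ)
    (hη : ∀ i, ContDiff ℝ (⊤ : ℕ∞) (η i))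
    (hηpos : ∀ i : Fin n, ∀ x ∈ U, 0 < η i (x i)) :
    (∀ i j k : Fin n, i ≠ j → j ≠ k → i ≠ k → ∀ x ∈ U,
      (pd k (fun y => β i j y * Real.sqrt (η i (y i) / η j (y j))) x =
          (β i k x * Real.sqrt (η i (x i) / η k (x k))) *
            (β k j x * Real.sqrt (η k (x k) / η j (x j))) ↔
        pd k (β i j) x = β i k x * β k j x)) ∧
    (∀ i j : Fin n, i ≠ j → ∀ x ∈ U,
      (pd i (fun y => β i j y * Real.sqrt (η i (y i) / η j (y j))) x +
          pd j (fun y => β j i y * Real.sqrt (η j (y j) / η i (y i))) x +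
          ∑ k ∈ ({i, j}ᶜ : Finset (Fin n)),
            (β k i x * Real.sqrt (η k (x k) / η i (x i))) *
              (β k j x * Real.sqrt (η k (x k) / η j (x j))) = 0 ↔
        η i (x i) * pd i (β i j) x + η j (x j) * pd j (β j i) x +
            (1 / 2) * deriv (η i) (x i) * β i j x +
            (1 / 2) * deriv (η j) (x j) * β j i x +
            ∑ k ∈ ({i, j}ᶜ : Finset (Fin n)), η k (x k) * β k i x * β k j x = 0)) := by
  constructor
  · intro i j k hij hjk hik x hx
    have hβd : DifferentiableAt ℝ (β i j) x :=
      ((hβ i j hij).contDiffAt (hU.mem_nhds hx)).differentiableAt (by simp)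
    have hi := hηpos i x hx
    have hj := hηpos j x hx
    have hk := hηpos k x hx
    have hsi : Real.sqrt (η i (x i)) ≠ 0 := Real.sqrt_ne_zero'.2 hi
    have hsj : Real.sqrt (η j (x j)) ≠ 0 := Real.sqrt_ne_zero'.2 hj
    have hsk : Real.sqrt (η k (x k)) ≠ 0 := Real.sqrt_ne_zero'.2 hk
    rw [pd_tilde i j k hβd (hη i) (hη j) hi hj]
    rw [Pi.single_eq_of_ne hik, Pi.single_eq_of_ne hjk]
    rw [Real.sqrt_div hi.le, Real.sqrt_div hk.le]
    have hc : Real.sqrt (η i (x i)) / Real.sqrt (η j (x j)) ≠ 0 := div_ne_zero hsi hsj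
    have hR : (β i k x * (Real.sqrt (η i (x i)) / Real.sqrt (η k (x k)))) *
        (β k j x * (Real.sqrt (η k (x k)) / Real.sqrt (η j (x j)))) =
        (β i k x * β k j x) * (Real.sqrt (η i (x i)) / Real.sqrt (η j (x j))) := by
      field_simp
    constructor
    · intro h
      have h' : pd k (β i j) x * (Real.sqrt (η i (x i)) / Real.sqrt (η j (x j))) =
          (β i k x * β k j x) * (Real.sqrt (η i (x i)) / Real.sqrt (η j (x j))) := by
        linear_combination h + hR
      exact mul_right_cancel₀ hc h'
    · intro h
      linear_combination (Real.sqrt (η i (x i)) / Real.sqrt (η j (x j))) * h - hR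
  · intro i j hij x hx
    have hβd1 : DifferentiableAt ℝ (β i j) x :=
      ((hβ i j hij).contDiffAt (hU.mem_nhds hx)).differentiableAt (by simp)
    have hβd2 : DifferentiableAt ℝ (β j i) x :=
      ((hβ j i hij.symm).contDiffAt (hU.mem_nhds hx)).differentiableAt (by simp)
    have hi := hηpos i x hx
    have hj := hηpos j x hx
    set sa := Real.sqrt (η i (x i)) with hsa
    set sb := Real.sqrt (η j (x j)) with hsb
    have hsi : sa ≠ 0 := Real.sqrt_ne_zero'.2 hi
    have hsj : sb ≠ 0 := Real.sqrt_ne_zero'.2 hj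
    rw [pd_tilde i j i hβd1 (hη i) (hη j) hi hj,
        pd_tilde j i j hβd2 (hη j) (hη i) hj hi]
    rw [Pi.single_eq_same, Pi.single_eq_same,
        Pi.single_eq_of_ne (Ne.symm hij), Pi.single_eq_of_ne hij]
    have hsum : ∑ k ∈ ({i, j}ᶜ : Finset (Fin n)),
        (β k i x * Real.sqrt (η k (x k) / η i (x i))) *
          (β k j x * Real.sqrt (η k (x k) / η j (x j))) =
        (∑ k ∈ ({i, j}ᶜ : Finset (Fin n)), η k (x k) * β k i x * β k j x) / (sa * sb) := by
      rw [Finset.sum_div]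
      refine Finset.sum_congr rfl ?_
      intro k hk
      have hkpos := hηpos k x hx
      have hss : Real.sqrt (η k (x k)) * Real.sqrt (η k (x k)) = η k (x k) :=
        Real.mul_self_sqrt hkpos.le
      rw [Real.sqrt_div hkpos.le, Real.sqrt_div hkpos.le, ← hsa, ← hsb]
      calc (β k i x * (Real.sqrt (η k (x k)) / sa)) *
            (β k j x * (Real.sqrt (η k (x k)) / sb))
          = (Real.sqrt (η k (x k)) * Real.sqrt (η k (x k))) * β k i x * β k j x / (sa * sb) := by
            ring
        _ = η k (x k) * β k i x * β k j x / (sa * sb) := by rw [hss]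
    rw [hsum]
    have ha : η i (x i) = sa * sa := (Real.mul_self_sqrt hi.le).symm
    have hb : η j (x j) = sb * sb := (Real.mul_self_sqrt hj.le).symm
    set S := ∑ k ∈ ({i, j}ᶜ : Finset (Fin n)), η k (x k) * β k i x * β k j x with hS
    set A := pd i (β i j) x with hA
    set B := pd j (β j i) x with hB
    have hkey : (A * (sa / sb) + β i j x * (deriv (η i) (x i) / (2 * sa) * sb⁻¹)
          + (B * (sb / sa) + β j i x * (deriv (η j) (x j) / (2 * sb) * sa⁻¹))
          + S / (sa * sb)) * (sa * sb) =
        η i (x i) * A + η j (x j) * B +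
          (1 / 2) * deriv (η i) (x i) * β i j x +
          (1 / 2) * deriv (η j) (x j) * β j i x + S := by
      rw [ha, hb]
      field_simp
      ring
    constructor
    · intro h
      linear_combination (sa * sb) * h - hkey
    · intro h
      have h2 : (A * (sa / sb) + β i j x * (deriv (η i) (x i) / (2 * sa) * sb⁻¹)
          + (B * (sb / sa) + β j i x * (deriv (η j) (x j) / (2 * sb) * sa⁻¹))
          + S / (sa * sb)) * (sa * sb) = 0 := by
        linear_combination hkey + h
      rcases mul_eq_zero.1 h2 with h3 | h3
      · linear_combination h3
      · exact absurd h3 (mul_ne_zero hsi hsj)
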